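/- arXiv:1005.5142 — 2 statements merged into one kernel-verified Lean document; each statement's English description precedes it below -/
import Mathlib

section
/- Let μ be a finite measure on a measurable space (S, 𝒮) and V ⊆ S a set that is not μ-measurable (i.e., μᵢ(V) ≠ μₑ(V)). Then there exist two measures μ₁ and μ₂ on (S, 𝒮_V), both extending μ, such that μ₁(V) ≠ μ₂(V). -/
open MeasureTheory Set
open scoped ENNReal

/-- The inner measure induced by μ: sup of measures of measurable subsets. -/
noncomputable def innerM {S : Type*} (m : MeasurableSpace S) (μ : @Measure S m)
    (A : Set S) : ℝ≥0∞ :=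
  ⨆ (M : Set S) (_ : MeasurableSet[m] M ∧ M ⊆ A), μ M

/-- The outer measure induced by μ: inf of measures of measurable supersets. -/
noncomputable def outerM {S : Type*} (m : MeasurableSpace S) (μ : @Measure S m)
    (A : Set S) : ℝ≥0∞ :=
  ⨅ (M : Set S) (_ : MeasurableSet[m] M ∧ A ⊆ M), μ M

/-- The outer measure equals the measure of a measurable hull. -/
lemma outerM_eq {S : Type*} (m : MeasurableSpace S) (μ : @Measure S m) (V : Set S) :
    outerM m μ V = μ V := by
  refine le_antisymm ?_ ?_
  · have := iInf_le (fun M : Set S => ⨅ (_ : MeasurableSet[m] M ∧ V ⊆ M), μ M)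
      (toMeasurable μ V)
    refine le_trans (le_trans this ?_) (le_of_eq (measure_toMeasurable V))
    exact iInf_le _ ⟨measurableSet_toMeasurable μ V, subset_toMeasurable μ V⟩
  · exact le_iInf fun M => le_iInf fun hM => measure_mono hM.2

/-- The inner measure equals the measure of the complement of a measurable hull
of the complement. -/
lemma innerM_eq {S : Type*} (m : MeasurableSpace S) (μ : @Measure S m)
    [IsFiniteMeasure μ] (V : Set S) :
    innerM m μ V = μ ((toMeasurable μ Vᶜ)ᶜ) := by
  set E := toMeasurable μ Vᶜ with hEdef
  have hE : MeasurableSet E := measurableSet_toMeasurable μ Vᶜ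
  refine le_antisymm ?_ ?_
  · refine iSup_le fun M => iSup_le fun hM => ?_
    have h1 : μ M + μ E ≤ μ Eᶜ + μ E := by
      have hμE : μ E = μ Vᶜ := measure_toMeasurable Vᶜ
      have h2 : μ Vᶜ ≤ μ Mᶜ := measure_mono (compl_subset_compl.mpr hM.2)
      calc μ M + μ E ≤ μ M + μ Mᶜ := by rw [hμE]; exact add_le_add le_rfl h2
        _ = μ Set.univ := measure_add_measure_compl hM.1
        _ = μ Eᶜ + μ E := by rw [add_comm, measure_add_measure_compl hE]
    exact (ENNReal.add_le_add_iff_right (measure_ne_top μ E)).mp h1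
  · refine le_trans ?_ (le_iSup _ Eᶜ)
    have hsub : Eᶜ ⊆ V := by
      rw [← compl_compl V]
      exact compl_subset_compl.mpr (subset_toMeasurable μ Vᶜ)
    exact le_iSup_of_le ⟨hE.compl, hsub⟩ le_rfl

/-- Key construction: for any set `W`, there is an outer measure agreeing with `μ`
on `m`-measurable sets, with `ω W = μ W` (the outer measure of `W`),
`ω Wᶜ = μ ((toMeasurable μ W)ᶜ)`, and whose Carathéodory σ-algebra contains
`m` and `W`. -/
lemma aux_ext {S : Type*} (m : MeasurableSpace S) (μ : @Measure S m)
    [IsFiniteMeasure μ] (W : Set S) :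
    ∃ ω : OuterMeasure S,
      (∀ B : Set S, MeasurableSet[m] B → ω B = μ B) ∧
      ω W = μ W ∧ ω Wᶜ = μ ((toMeasurable μ W)ᶜ) ∧
      m ≤ ω.caratheodory ∧ MeasurableSet[ω.caratheodory] W := by
  set E := toMeasurable μ W with hEdef
  have hE : MeasurableSet E := measurableSet_toMeasurable μ W
  have hWE : W ⊆ E := subset_toMeasurable μ W
  set ν₁ : OuterMeasure S := OuterMeasure.restrict W (μ.restrict E).toOuterMeasure with hν₁
  set ν₂ : OuterMeasure S := (μ.restrict Eᶜ).toOuterMeasure with hν₂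
  have hν₁app : ∀ t : Set S, ν₁ t = μ (t ∩ W) := by
    intro t
    rw [hν₁, OuterMeasure.restrict_apply, Measure.toOuterMeasure_apply,
      Measure.restrict_apply' hE]
    congr 1
    exact inter_eq_left.mpr (inter_subset_right.trans hWE)
  have hν₂app : ∀ t : Set S, ν₂ t = μ (t ∩ Eᶜ) := by
    intro t
    rw [hν₂, Measure.toOuterMeasure_apply, Measure.restrict_apply' hE.compl]
  refine ⟨ν₁ + ν₂, ?_, ?_, ?_, ?_, ?_⟩
  · -- extends μ
    intro B hB
    have h1 : μ (B ∩ W) = μ (B ∩ E) := by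
      rw [inter_comm B W, inter_comm B E]
      exact (Measure.measure_toMeasurable_inter hB (measure_ne_top μ W)).symm
    have : (ν₁ + ν₂) B = μ (B ∩ W) + μ (B ∩ Eᶜ) := by
      simp [hν₁app, hν₂app]
    rw [this, h1, ← Set.diff_eq]
    exact measure_inter_add_diff B hE
  · -- value at W
    have : (ν₁ + ν₂) W = μ (W ∩ W) + μ (W ∩ Eᶜ) := by simp [hν₁app, hν₂app]
    rw [this, inter_self]
    have : W ∩ Eᶜ = ∅ := by
      rw [← Set.disjoint_iff_inter_eq_empty]
      exact disjoint_compl_right_iff_subset.mpr hWE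
    rw [this, measure_empty, add_zero]
  · -- value at Wᶜ
    have : (ν₁ + ν₂) Wᶜ = μ (Wᶜ ∩ W) + μ (Wᶜ ∩ Eᶜ) := by simp [hν₁app, hν₂app]
    rw [this, compl_inter_self, measure_empty, zero_add]
    congr 1
    exact inter_eq_right.mpr (compl_subset_compl.mpr hWE)
  · -- m ≤ caratheodory
    intro B hB
    rw [OuterMeasure.isCaratheodory_iff]
    intro t
    have hB2 := (le_toOuterMeasure_caratheodory (μ.restrict Eᶜ)) B hB
    rw [OuterMeasure.isCaratheodory_iff] at hB2
    have h1 : ν₁ t = ν₁ (t ∩ B) + ν₁ (t \ B) := by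
      rw [hν₁app, hν₁app, hν₁app]
      have e1 : t ∩ B ∩ W = (t ∩ W) ∩ B := by ext x; simp; tauto
      have e2 : (t \ B) ∩ W = (t ∩ W) \ B := by ext x; simp; tauto
      rw [e1, e2, measure_inter_add_diff (t ∩ W) hB]
    simp only [OuterMeasure.coe_add, Pi.add_apply]
    rw [h1]
    try rw [hB2 t]
    try ring
  · -- W is Caratheodory
    rw [OuterMeasure.isCaratheodory_iff]
    intro t
    have hWEc : W ∩ Eᶜ = ∅ := by
      rw [← Set.disjoint_iff_inter_eq_empty]
      exact disjoint_compl_right_iff_subset.mpr hWE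
    simp only [OuterMeasure.coe_add, Pi.add_apply]
    rw [hν₁app, hν₂app, hν₁app, hν₂app, hν₁app, hν₂app]
    have e1 : t ∩ W ∩ W = t ∩ W := by rw [inter_assoc, inter_self]
    have e2 : t ∩ W ∩ Eᶜ = ∅ := by simp [inter_assoc, hWEc]
    have e3 : (t \ W) ∩ W = ∅ := by ext x; simp
    have e4 : (t \ W) ∩ Eᶜ = t ∩ Eᶜ := by
      ext x
      simp only [mem_inter_iff, mem_diff, mem_compl_iff]
      constructor
      · tauto
      · rintro ⟨hxt, hxE⟩
        exact ⟨⟨hxt, fun hxW => hxE (hWE hxW)⟩, hxE⟩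
    rw [e1, e2, e3, e4]
    simp

/-- If V is not μ-measurable (μᵢ(V) ≠ μₑ(V)), then μ has two
extensions to 𝒮_V disagreeing on V. -/
theorem exists_two_extensions_of_nonmeasurable {S : Type*} (m : MeasurableSpace S)
    (μ : @Measure S m) (_hfin : @IsFiniteMeasure S m μ) (V : Set S)
    (hV : innerM m μ V ≠ outerM m μ V) :
    ∃ μ₁ μ₂ : @Measure S (m ⊔ MeasurableSpace.generateFrom {V}),
      (∀ B : Set S, MeasurableSet[m] B → μ₁ B = μ B) ∧
      (∀ B : Set S, MeasurableSet[m] B → μ₂ B = μ B) ∧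
      μ₁ V ≠ μ₂ V := by
  haveI := _hfin
  obtain ⟨ω₁, hext₁, hω₁V, -, hcar₁, hcarV₁⟩ := aux_ext m μ V
  obtain ⟨ω₂, hext₂, -, hω₂V, hcar₂, hcarVc₂⟩ := aux_ext m μ Vᶜ
  rw [compl_compl] at hω₂V
  have hle₁ : m ⊔ MeasurableSpace.generateFrom {V} ≤ ω₁.caratheodory := by
    refine sup_le hcar₁ (MeasurableSpace.generateFrom_le ?_)
    rintro t ht
    rw [Set.mem_singleton_iff] at ht
    subst ht
    exact hcarV₁
  have hle₂ : m ⊔ MeasurableSpace.generateFrom {V} ≤ ω₂.caratheodory := by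
    refine sup_le hcar₂ (MeasurableSpace.generateFrom_le ?_)
    rintro t ht
    rw [Set.mem_singleton_iff] at ht
    subst ht
    have := hcarVc₂.compl
    rwa [compl_compl] at this
  refine ⟨@OuterMeasure.toMeasure S (m ⊔ MeasurableSpace.generateFrom {V}) ω₁ hle₁,
    @OuterMeasure.toMeasure S (m ⊔ MeasurableSpace.generateFrom {V}) ω₂ hle₂, ?_, ?_, ?_⟩
  · intro B hB
    rw [@toMeasure_apply S (m ⊔ MeasurableSpace.generateFrom {V}) ω₁ hle₁ B
      ((le_sup_left : m ≤ m ⊔ MeasurableSpace.generateFrom {V}) B hB)]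
    exact hext₁ B hB
  · intro B hB
    rw [@toMeasure_apply S (m ⊔ MeasurableSpace.generateFrom {V}) ω₂ hle₂ B
      ((le_sup_left : m ≤ m ⊔ MeasurableSpace.generateFrom {V}) B hB)]
    exact hext₂ B hB
  · have hVmeas : MeasurableSet[m ⊔ MeasurableSpace.generateFrom {V}] V :=
      (le_sup_right : MeasurableSpace.generateFrom {V} ≤ m ⊔ MeasurableSpace.generateFrom {V}) _
        (MeasurableSpace.measurableSet_generateFrom (Set.mem_singleton V))
    rw [@toMeasure_apply S (m ⊔ MeasurableSpace.generateFrom {V}) ω₁ hle₁ V hVmeas,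
      @toMeasure_apply S (m ⊔ MeasurableSpace.generateFrom {V}) ω₂ hle₂ V hVmeas, hω₁V, hω₂V]
    intro h
    apply hV
    rw [innerM_eq m μ V, outerM_eq m μ V, h]
end

section
/- In the LMP S₃, for any two distinct points y, z ∈ (0,1) there is a label a ∈ ℕ such that τ_a(y, {x}) = 1 and τ_a(z, {x}) = 0 (or vice versa); consequently any state bisimulation on S₃ restricted to (0,1) ∪ {x} is contained in the identity, and V is closed under the state bisimilarity relation. -/
open MeasureTheory Set
open scoped ENNReal Classical

noncomputable section

/-- The open unit interval (0,1) as a measurable space (Borel subsets). -/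
abbrev I01 : Type := ↥(Set.Ioo (0:ℝ) 1)

/-- The state space of the LMP S₃: (0,1) ⊕ {s,t,x}, where s,t,x are coded as
`Sum.inr 0`, `Sum.inr 1`, `Sum.inr 2`. -/
abbrev St3 : Type := I01 ⊕ Fin 3

/-- Lebesgue measure on (0,1). -/
def lebI : Measure I01 := (volume : Measure ℝ).comap Subtype.val

/-- The Borel σ-algebra on (0,1). -/
def mI : MeasurableSpace I01 := inferInstance

/-- 𝒮_V = σ(Borel((0,1)) ∪ {V}). -/
def mV (V : Set I01) : MeasurableSpace I01 := mI ⊔ MeasurableSpace.generateFrom {V}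

/-- 𝒮₃ = 𝒮_V ⊕ Pow({s,t,x}). -/
def m3 (V : Set I01) : MeasurableSpace St3 :=
  @Sum.instMeasurableSpace I01 (Fin 3) (mV V) ⊤

/-- The labels of S₃: ℕ ∪ {∞}, with ∞ coded as `Sum.inr ()`. -/
abbrev L3 : Type := ℕ ⊕ Unit

/-- The transition kernels of the LMP S₃:
τ_a(r,·) = χ_{B_a}(r)·δ_x for a ∈ ℕ, and
τ_∞(r,·) = χ_{{s}}(r)·m₀(· ∩ (0,1)) + χ_{{t}}(r)·m₁(· ∩ (0,1)). -/
def kern3 (V : Set I01) (m₀ m₁ : @Measure I01 (mV V)) (B : ℕ → Set I01) :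
    L3 → St3 → @Measure St3 (m3 V)
  | Sum.inl a => fun r =>
      match r with
      | Sum.inl y => if y ∈ B a then @Measure.dirac St3 (m3 V) (Sum.inr 2) else 0
      | Sum.inr _ => 0
  | Sum.inr _ => fun r =>
      match r with
      | Sum.inr i =>
          if i = 0 then @Measure.map I01 St3 (mV V) (m3 V) Sum.inl m₀
          else if i = 1 then @Measure.map I01 St3 (mV V) (m3 V) Sum.inl m₁
          else 0
      | Sum.inl _ => 0

/-- `B` enumerates the open subintervals of (0,1) with rational endpoints. -/
def EnumeratesRationalIntervals (B : ℕ → Set I01) : Prop :=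
  (∀ a : ℕ, ∃ p q : ℚ, B a = {y : I01 | (p:ℝ) < (y:ℝ) ∧ (y:ℝ) < (q:ℝ)}) ∧
  (∀ p q : ℚ, ∃ a : ℕ, B a = {y : I01 | (p:ℝ) < (y:ℝ) ∧ (y:ℝ) < (q:ℝ)})

/-- A set Q is R-closed: u ∈ Q and u R v imply v ∈ Q. -/
def RClosed {α : Type*} (R : α → α → Prop) (Q : Set α) : Prop :=
  ∀ u ∈ Q, ∀ v, R u v → v ∈ Q

/-- R is a state bisimulation on S₃. -/
def IsStateBisim3 (V : Set I01) (m₀ m₁ : @Measure I01 (mV V)) (B : ℕ → Set I01)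
    (R : St3 → St3 → Prop) : Prop :=
  Symmetric R ∧
  ∀ u v, R u v → ∀ l : L3, ∀ Q : Set St3, MeasurableSet[m3 V] Q → RClosed R Q →
    kern3 V m₀ m₁ B l u Q = kern3 V m₀ m₁ B l v Q


lemma lebI_univ_eq_one : lebI univ = 1 := by
  rw [lebI, Measure.comap_apply _ Subtype.val_injective
    (fun s hs => (MeasurableEmbedding.subtype_coe measurableSet_Ioo).measurableSet_image.2 hs)
    _ MeasurableSet.univ]
  rw [image_univ, Subtype.range_coe, Real.volume_Ioo]
  norm_num

lemma msX (V : Set I01) : MeasurableSet[m3 V] {(Sum.inr 2 : St3)} := by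
  rw [m3, measurableSet_sum_iff]
  refine ⟨?_, trivial⟩
  convert @MeasurableSet.empty _ (mV V) using 1
  ext y; simp

lemma exists_mem_B {B : ℕ → Set I01} (hB : EnumeratesRationalIntervals B) (y : I01) :
    ∃ a, y ∈ B a := by
  obtain ⟨p, hp⟩ := exists_rat_lt (y : ℝ)
  obtain ⟨q, hq⟩ := exists_rat_gt (y : ℝ)
  obtain ⟨a, ha⟩ := hB.2 p q
  exact ⟨a, by rw [ha]; exact ⟨hp, hq⟩⟩

lemma exists_sep_B {B : ℕ → Set I01} (hB : EnumeratesRationalIntervals B) {y z : I01}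
    (h : (y : ℝ) < z) : ∃ a, y ∈ B a ∧ z ∉ B a := by
  obtain ⟨p, hp⟩ := exists_rat_lt (y : ℝ)
  obtain ⟨q, hq1, hq2⟩ := exists_rat_btwn h
  obtain ⟨a, ha⟩ := hB.2 p q
  refine ⟨a, by rw [ha]; exact ⟨hp, hq1⟩, ?_⟩
  rw [ha]
  rintro ⟨-, h2⟩
  exact absurd (h2.trans hq2) (lt_irrefl _)

lemma kern_pos (V : Set I01) (m₀ m₁ : @Measure I01 (mV V)) (B : ℕ → Set I01)
    {a : ℕ} {y : I01} (h : y ∈ B a) (S : Set St3) (hS : MeasurableSet[m3 V] S)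
    (hx : (Sum.inr 2 : St3) ∈ S) :
    kern3 V m₀ m₁ B (Sum.inl a) (Sum.inl y) S = 1 := by
  show (if y ∈ B a then @Measure.dirac St3 (m3 V) (Sum.inr 2) else 0) S = 1
  rw [if_pos h, @Measure.dirac_apply' _ (m3 V) _ _ hS, indicator_of_mem hx]
  rfl

lemma kern_neg (V : Set I01) (m₀ m₁ : @Measure I01 (mV V)) (B : ℕ → Set I01)
    {a : ℕ} {z : I01} (h : z ∉ B a) (S : Set St3) :
    kern3 V m₀ m₁ B (Sum.inl a) (Sum.inl z) S = 0 := by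
  show (if z ∈ B a then @Measure.dirac St3 (m3 V) (Sum.inr 2) else 0) S = 0
  rw [if_neg h]
  rfl

lemma kern_inr (V : Set I01) (m₀ m₁ : @Measure I01 (mV V)) (B : ℕ → Set I01)
    (a : ℕ) (i : Fin 3) (S : Set St3) :
    kern3 V m₀ m₁ B (Sum.inl a) (Sum.inr i) S = 0 := rfl

lemma kern_inf_inl (V : Set I01) (m₀ m₁ : @Measure I01 (mV V)) (B : ℕ → Set I01)
    (y : I01) (S : Set St3) :
    kern3 V m₀ m₁ B (Sum.inr ()) (Sum.inl y) S = 0 := rfl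

lemma kern_inf_s (V : Set I01) (m₀ m₁ : @Measure I01 (mV V)) (B : ℕ → Set I01)
    (hm₀ : ∀ A : Set I01, MeasurableSet[mI] A → m₀ A = lebI A) :
    kern3 V m₀ m₁ B (Sum.inr ()) (Sum.inr 0) univ = 1 := by
  show @Measure.map I01 St3 (mV V) (m3 V) Sum.inl m₀ univ = 1
  rw [@Measure.map_apply _ _ (mV V) (m3 V) m₀ Sum.inl (@measurable_inl _ _ (mV V) ⊤) _
    MeasurableSet.univ, preimage_univ, hm₀ univ MeasurableSet.univ, lebI_univ_eq_one]

lemma kern_inf_t (V : Set I01) (m₀ m₁ : @Measure I01 (mV V)) (B : ℕ → Set I01)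
    (hm₁ : ∀ A : Set I01, MeasurableSet[mI] A → m₁ A = lebI A) :
    kern3 V m₀ m₁ B (Sum.inr ()) (Sum.inr 1) univ = 1 := by
  show @Measure.map I01 St3 (mV V) (m3 V) Sum.inl m₁ univ = 1
  rw [@Measure.map_apply _ _ (mV V) (m3 V) m₁ Sum.inl (@measurable_inl _ _ (mV V) ⊤) _
    MeasurableSet.univ, preimage_univ, hm₁ univ MeasurableSet.univ, lebI_univ_eq_one]

lemma rclosed_univ {α : Type*} (R : α → α → Prop) : RClosed R univ :=
  fun _ _ _ _ => trivial

/-- distinct points y,z of (0,1) are separated by some label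
a ∈ ℕ: τ_a(y,{x}) = 1 and τ_a(z,{x}) = 0 (or vice versa); consequently every
state bisimulation on S₃ restricted to (0,1) ∪ {x} is contained in the
identity, and (the copy of) V is closed under every state bisimulation. -/
theorem separation_and_V_closed (V : Set I01)
    (hV : ¬ @NullMeasurableSet I01 mI V lebI)
    (m₀ m₁ : @Measure I01 (mV V))
    (hm₀ : ∀ A : Set I01, MeasurableSet[mI] A → m₀ A = lebI A)
    (hm₁ : ∀ A : Set I01, MeasurableSet[mI] A → m₁ A = lebI A)
    (hne : m₀ V ≠ m₁ V)
    (B : ℕ → Set I01) (hB : EnumeratesRationalIntervals B) :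
    (∀ y z : I01, y ≠ z → ∃ a : ℕ,
      (kern3 V m₀ m₁ B (Sum.inl a) (Sum.inl y) {Sum.inr 2} = 1 ∧
        kern3 V m₀ m₁ B (Sum.inl a) (Sum.inl z) {Sum.inr 2} = 0) ∨
      (kern3 V m₀ m₁ B (Sum.inl a) (Sum.inl z) {Sum.inr 2} = 1 ∧
        kern3 V m₀ m₁ B (Sum.inl a) (Sum.inl y) {Sum.inr 2} = 0)) ∧
    (∀ R : St3 → St3 → Prop, IsStateBisim3 V m₀ m₁ B R →
      (∀ u v : St3, R u v →
        u ≠ Sum.inr 0 → u ≠ Sum.inr 1 → v ≠ Sum.inr 0 → v ≠ Sum.inr 1 → u = v) ∧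
      RClosed R (Sum.inl '' V)) := by
  constructor
  · -- separation
    intro y z hyz
    have hcoe : (y : ℝ) ≠ (z : ℝ) := fun h => hyz (Subtype.coe_injective h)
    rcases hcoe.lt_or_gt with h | h
    · obtain ⟨a, hy, hz⟩ := exists_sep_B hB h
      exact ⟨a, Or.inl ⟨kern_pos V m₀ m₁ B hy _ (msX V) rfl,
        kern_neg V m₀ m₁ B hz _⟩⟩
    · obtain ⟨a, hz, hy⟩ := exists_sep_B hB h
      exact ⟨a, Or.inr ⟨kern_pos V m₀ m₁ B hz _ (msX V) rfl,
        kern_neg V m₀ m₁ B hy _⟩⟩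
  · intro R hRb
    obtain ⟨hsym, hbis⟩ := hRb
    -- key: no point of (0,1) ∪ {x} is related to s or t, and related ones are equal
    have hU : ∀ u v : St3, R u v → ∀ l, kern3 V m₀ m₁ B l u univ = kern3 V m₀ m₁ B l v univ :=
      fun u v h l => hbis u v h l univ MeasurableSet.univ (rclosed_univ R)
    have huniv1 : ∀ (y : I01), ∃ a, kern3 V m₀ m₁ B (Sum.inl a) (Sum.inl y) univ = 1 := by
      intro y
      obtain ⟨a, ha⟩ := exists_mem_B hB y
      exact ⟨a, kern_pos V m₀ m₁ B ha _ MeasurableSet.univ trivial⟩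
    have hnot_st : ∀ (y : I01) (v : St3), R (Sum.inl y) v → v ≠ Sum.inr 0 ∧ v ≠ Sum.inr 1 := by
      intro y v hR
      constructor
      · rintro rfl
        have := hU _ _ hR (Sum.inr ())
        rw [kern_inf_inl, kern_inf_s V m₀ m₁ B hm₀] at this
        simp at this
      · rintro rfl
        have := hU _ _ hR (Sum.inr ())
        rw [kern_inf_inl, kern_inf_t V m₀ m₁ B hm₁] at this
        simp at this
    have key : ∀ u v : St3, R u v →
        u ≠ Sum.inr 0 → u ≠ Sum.inr 1 → v ≠ Sum.inr 0 → v ≠ Sum.inr 1 → u = v := by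
      intro u v hR hu0 hu1 hv0 hv1
      rcases u with y | i
      · rcases v with z | j
        · -- both in (0,1)
          by_contra hne'
          have hyz : y ≠ z := fun h => hne' (congrArg Sum.inl h)
          have hcoe : (y : ℝ) ≠ (z : ℝ) := fun h => hyz (Subtype.coe_injective h)
          rcases hcoe.lt_or_gt with h | h
          · obtain ⟨a, hy, hz⟩ := exists_sep_B hB h
            have := hU _ _ hR (Sum.inl a)
            rw [kern_pos V m₀ m₁ B hy _ MeasurableSet.univ trivial,
              kern_neg V m₀ m₁ B hz] at this
            simp at this
          · obtain ⟨a, hz, hy⟩ := exists_sep_B hB h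
            have := hU _ _ hR (Sum.inl a)
            rw [kern_pos V m₀ m₁ B hz _ MeasurableSet.univ trivial,
              kern_neg V m₀ m₁ B hy] at this
            simp at this
        · exfalso
          obtain ⟨a, ha⟩ := huniv1 y
          have := hU _ _ hR (Sum.inl a)
          rw [ha, kern_inr] at this
          simp at this
      · rcases v with z | j
        · exfalso
          obtain ⟨a, ha⟩ := huniv1 z
          have := hU _ _ (hsym hR) (Sum.inl a)
          rw [ha, kern_inr] at this
          simp at this
        · have h0 : i ≠ 0 := fun h => hu0 (by rw [h])
          have h1 : i ≠ 1 := fun h => hu1 (by rw [h])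
          have g0 : j ≠ 0 := fun h => hv0 (by rw [h])
          have g1 : j ≠ 1 := fun h => hv1 (by rw [h])
          have hi : i = 2 := by omega
          have hj : j = 2 := by omega
          rw [hi, hj]
    refine ⟨key, ?_⟩
    rintro u ⟨y, hyV, rfl⟩ v hR
    obtain ⟨hv0, hv1⟩ := hnot_st y v hR
    have := key (Sum.inl y) v hR (by simp) (by simp) hv0 hv1
    exact ⟨y, hyV, this⟩


end
end
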